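/- arXiv:1801.04109 — 4 statements merged into one kernel-verified Lean document; each statement's English description precedes it below -/
import Mathlib

section
/- Let N be a continuous martingale with N₀ = 0 and let p ∈ (0,1). Then there exists a constant a_p > 0, depending only on p, such that for all β > 0 and h > 0, if ℙ(⟨N⟩_h ≥ β) ≥ p, then E[|N_h|] ≥ a_p √β. -/
/-!
Stop `N` at the first time `σ ≤ h` at which `|N|` reaches `√β`. Optional sampling for the
martingales `N` and `N² - ⟨N⟩`, obtained by approximating `σ` from above by dyadic stopping times
and using the uniform integrability of conditional expectations, gives `E|N_σ| ≤ E|N_h|` and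
`E N_σ² = E⟨N⟩_σ`. On `{⟨N⟩_h ≥ β}` either `σ = h` or `|N_σ| = √β`, so
`β 1{⟨N⟩_h ≥ β} ≤ ⟨N⟩_σ + N_σ²`. Taking expectations, `β p ≤ 2 E N_σ² ≤ 2 √β E|N_σ|`,
hence `a_p = p / 2` works.
-/

open MeasureTheory NNReal ENNReal Filter Topology

theorem exists_mem_iff_forall_exists_infEDist_lt {X β : Type*} [TopologicalSpace X]
    [PseudoEMetricSpace β] {K D : Set X} (hK : IsCompact K) (hDK : D ⊆ K) (hKD : K ⊆ closure D)
    {f : X → β} (hf : Continuous f) {s : Set β} (hs : IsClosed s) :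
    (∃ x ∈ K, f x ∈ s) ↔ ∀ k : ℕ, ∃ x ∈ D, Metric.infEDist (f x) s < (k : ℝ≥0∞)⁻¹ := by
  have hφ : Continuous fun x => Metric.infEDist (f x) s := Metric.continuous_infEDist.comp hf
  constructor
  · rintro ⟨x, hxK, hxs⟩ k
    have hxU : x ∈ {y | Metric.infEDist (f y) s < (k : ℝ≥0∞)⁻¹} := by
      simp [Metric.infEDist_zero_of_mem hxs]
    obtain ⟨y, hyU, hyD⟩ := mem_closure_iff.1 (hKD hxK) _ (isOpen_lt hφ continuous_const) hxU
    exact ⟨y, hyD, hyU⟩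
  · intro h
    obtain ⟨x₀, hx₀K, hmin⟩ := hK.exists_isMinOn
      (let ⟨x, hxD, _⟩ := h 0; ⟨x, hDK hxD⟩) hφ.continuousOn
    refine ⟨x₀, hx₀K, (Metric.mem_iff_infEDist_zero_of_closed hs).2 ?_⟩
    by_contra hne
    obtain ⟨k, hk⟩ := ENNReal.exists_inv_nat_lt hne
    obtain ⟨y, hyD, hy⟩ := h k
    exact (hk.trans_le (hmin (hDK hyD))).not_gt hy

section Dyadic

noncomputable def dyadicCeil (k : ℕ) (x : ℝ≥0) : ℝ≥0 := ⌈x * 2 ^ k⌉₊ / 2 ^ k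

variable {k : ℕ} {x t : ℝ≥0}

theorem le_dyadicCeil : x ≤ dyadicCeil k x := by
  rw [dyadicCeil, le_div_iff₀ (by positivity)]
  exact Nat.le_ceil _

theorem dyadicCeil_le_add : dyadicCeil k x ≤ x + 2⁻¹ ^ k := by
  rw [dyadicCeil, div_le_iff₀ (by positivity), add_mul, inv_pow, inv_mul_cancel₀ (by positivity)]
  exact (Nat.ceil_lt_add_one zero_le).le

theorem dyadicCeil_le_iff : dyadicCeil k x ≤ t ↔ x ≤ ⌊t * 2 ^ k⌋₊ / 2 ^ k := by
  rw [dyadicCeil, div_le_iff₀ (by positivity), le_div_iff₀ (by positivity), ← Nat.ceil_le]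
  exact (Nat.le_floor_iff zero_le).symm

theorem tendsto_dyadicCeil (x : ℝ≥0) : Tendsto (dyadicCeil · x) atTop (𝓝 x) := by
  refine tendsto_of_tendsto_of_tendsto_of_le_of_le tendsto_const_nhds ?_
    (fun _ => le_dyadicCeil) (fun _ => dyadicCeil_le_add)
  simpa using tendsto_const_nhds.add
    (NNReal.tendsto_pow_atTop_nhds_zero_of_lt_one (inv_lt_one_of_one_lt₀ one_lt_two))

end Dyadic

namespace MeasureTheory

section HittingTime

variable {Ω ι β : Type*} [ConditionallyCompleteLinearOrder ι] [TopologicalSpace ι]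
  [OrderTopology ι] [TopologicalSpace β] {u : ι → Ω → β} {s : Set β} {n m : ι} {ω : Ω}

theorem hittingBtwn_mem_set_of_isClosed (hu : Continuous (u · ω)) (hs : IsClosed s)
    (h_exists : ∃ j ∈ Set.Icc n m, u j ω ∈ s) : u (hittingBtwn u s n m ω) ω ∈ s := by
  simp_rw [hittingBtwn, if_pos h_exists]
  obtain ⟨j, hj, hjs⟩ := h_exists
  exact ((isClosed_Icc.inter (hs.preimage hu)).csInf_mem ⟨j, hj, hjs⟩
    bddBelow_Icc.inter_of_left).2

theorem hittingBtwn_eq_or_mem_set_of_isClosed (hu : Continuous (u · ω)) (hs : IsClosed s) :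
    hittingBtwn u s n m ω = m ∨ u (hittingBtwn u s n m ω) ω ∈ s := by
  by_cases h_exists : ∃ j ∈ Set.Icc n m, u j ω ∈ s
  · exact Or.inr (hittingBtwn_mem_set_of_isClosed hu hs h_exists)
  · left
    simp_rw [hittingBtwn, if_neg h_exists]

theorem hittingBtwn_le_iff_of_lt_of_isClosed (hu : Continuous (u · ω)) (hs : IsClosed s)
    {i : ι} (hi : i < m) : hittingBtwn u s n m ω ≤ i ↔ ∃ j ∈ Set.Icc n i, u j ω ∈ s := by
  refine ⟨fun hle => ?_, fun ⟨j, hj, hjs⟩ =>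
    (hittingBtwn_le_of_mem hj.1 (hj.2.trans hi.le) hjs).trans hj.2⟩
  have h_exists : ∃ j ∈ Set.Icc n m, u j ω ∈ s := by
    by_contra h
    simp_rw [hittingBtwn, if_neg h] at hle
    exact hle.not_gt hi
  exact ⟨_, ⟨le_hittingBtwn_of_exists h_exists, hle⟩,
    hittingBtwn_mem_set_of_isClosed hu hs h_exists⟩

theorem hittingBtwn_mem_closure_compl [DenselyOrdered ι] (hu : Continuous (u · ω))
    (hn : u n ω ∉ s) (hnm : n ≤ m) : u (hittingBtwn u s n m ω) ω ∈ closure sᶜ := by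
  rcases (le_hittingBtwn (u := u) (s := s) hnm ω).eq_or_lt with heq | hlt
  · exact heq ▸ subset_closure hn
  have hmem : hittingBtwn u s n m ω ∈ closure (Set.Ico n (hittingBtwn u s n m ω)) := by
    rw [closure_Ico hlt.ne]
    exact Set.right_mem_Icc.2 hlt.le
  refine closure_mono ?_ (hu.continuousWithinAt.mem_closure_image hmem)
  exact Set.image_subset_iff.2 fun k hk => notMem_of_lt_hittingBtwn hk.2 hk.1

theorem abs_hittingBtwn_le [DenselyOrdered ι] {u : ι → Ω → ℝ} {c : ℝ} (hu : Continuous (u · ω))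
    (hn : |u n ω| < c) (hnm : n ≤ m) : |u (hittingBtwn u {x | c ≤ |x|} n m ω) ω| ≤ c :=
  closure_minimal (fun _ hx => (not_le.1 hx).le) (isClosed_le continuous_abs continuous_const)
    (hittingBtwn_mem_closure_compl hu (not_le.2 hn) hnm)

end HittingTime

theorem isStoppingTime_hittingBtwn_of_continuous {Ω β : Type*} {mΩ : MeasurableSpace Ω}
    [PseudoEMetricSpace β] [MeasurableSpace β] [OpensMeasurableSpace β]
    {F : Filtration ℝ≥0 mΩ} {u : ℝ≥0 → Ω → β} (hadapt : Adapted F u)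
    (hu : ∀ ω, Continuous (u · ω)) {s : Set β} (hs : IsClosed s) (n m : ℝ≥0) :
    IsStoppingTime F (fun ω => ((hittingBtwn u s n m ω : ℝ≥0) : WithTop ℝ≥0)) := by
  intro t
  simp only [WithTop.coe_le_coe]
  rcases lt_or_ge t m with htm | hmt
  · obtain ⟨D, hDK, hDc, hKD⟩ :=
      (TopologicalSpace.IsSeparable.of_separableSpace (Set.Icc n t)).exists_countable_dense_subset
    have hset : {ω | hittingBtwn u s n m ω ≤ t} =
        ⋂ k : ℕ, ⋃ j ∈ D, {ω | Metric.infEDist (u j ω) s < (k : ℝ≥0∞)⁻¹} := by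
      ext ω
      simp only [Set.mem_ofPred_eq, Set.mem_iInter, Set.mem_iUnion, exists_prop]
      rw [hittingBtwn_le_iff_of_lt_of_isClosed (hu ω) hs htm]
      exact exists_mem_iff_forall_exists_infEDist_lt isCompact_Icc hDK hKD (hu ω) hs
    rw [hset]
    refine .iInter fun k => .biUnion hDc fun j hj => F.mono (hDK hj).2 _ ?_
    exact measurableSet_lt (Metric.continuous_infEDist.measurable.comp (hadapt j))
      measurable_const
  · simp [(hittingBtwn_le _).trans hmt]

theorem IsStoppingTime.dyadicCeil {Ω : Type*} {mΩ : MeasurableSpace Ω} {F : Filtration ℝ≥0 mΩ}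
    {σ : Ω → ℝ≥0} (hσ : IsStoppingTime F fun ω => ((σ ω : ℝ≥0) : WithTop ℝ≥0)) (k : ℕ) :
    IsStoppingTime F fun ω => ((dyadicCeil k (σ ω) : ℝ≥0) : WithTop ℝ≥0) := by
  intro t
  have hσt := hσ (⌊t * 2 ^ k⌋₊ / 2 ^ k)
  simp only [WithTop.coe_le_coe] at hσt ⊢
  simp_rw [dyadicCeil_le_iff]
  refine F.mono ?_ _ hσt
  rw [div_le_iff₀ (by positivity)]
  exact Nat.floor_le zero_le

section CondExpLimit

variable {Ω : Type*} {mΩ : MeasurableSpace Ω} {μ : Measure Ω} [IsFiniteMeasure μ]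
  {g V : Ω → ℝ} {𝓖 : ℕ → MeasurableSpace Ω}

theorem integrable_and_tendsto_eLpNorm_of_tendsto_condExp (hg : Integrable g μ)
    (h𝓖 : ∀ k, 𝓖 k ≤ mΩ) (hV : ∀ᵐ ω ∂μ, Tendsto (fun k => μ[g | 𝓖 k] ω) atTop (𝓝 (V ω))) :
    Integrable V μ ∧ Tendsto (fun k => eLpNorm (μ[g | 𝓖 k] - V) 1 μ) atTop (𝓝 0) := by
  have hui := hg.uniformIntegrable_condExp h𝓖
  have hmeas := tendstoInMeasure_of_tendsto_ae hui.1 hV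
  have hVi := hui.integrable_of_tendstoInMeasure hmeas
  exact ⟨hVi, tendsto_Lp_finite_of_tendstoInMeasure le_rfl one_ne_top hui.1
    (memLp_one_iff_integrable.2 hVi) hui.2.1 hmeas⟩

theorem integral_eq_of_tendsto_condExp (hg : Integrable g μ) (h𝓖 : ∀ k, 𝓖 k ≤ mΩ)
    (hV : ∀ᵐ ω ∂μ, Tendsto (fun k => μ[g | 𝓖 k] ω) atTop (𝓝 (V ω))) :
    ∫ ω, V ω ∂μ = ∫ ω, g ω ∂μ := by
  obtain ⟨hVi, hL1⟩ := integrable_and_tendsto_eLpNorm_of_tendsto_condExp hg h𝓖 hV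
  refine tendsto_nhds_unique (tendsto_integral_of_L1' V hVi.1
    (.of_forall fun _ => integrable_condExp) hL1) ?_
  simp_rw [integral_condExp (h𝓖 _)]
  exact tendsto_const_nhds

theorem integral_abs_le_of_tendsto_condExp (hg : Integrable g μ) (h𝓖 : ∀ k, 𝓖 k ≤ mΩ)
    (hV : ∀ᵐ ω ∂μ, Tendsto (fun k => μ[g | 𝓖 k] ω) atTop (𝓝 (V ω))) :
    ∫ ω, |V ω| ∂μ ≤ ∫ ω, |g ω| ∂μ := by
  obtain ⟨hVi, hL1⟩ := integrable_and_tendsto_eLpNorm_of_tendsto_condExp hg h𝓖 hV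
  have habs : Tendsto (fun k => eLpNorm ((fun ω => |μ[g | 𝓖 k] ω|) - fun ω => |V ω|) 1 μ)
      atTop (𝓝 0) :=
    tendsto_of_tendsto_of_tendsto_of_le_of_le tendsto_const_nhds hL1 (fun _ => zero_le)
      fun _ => eLpNorm_mono fun ω => by simpa using abs_abs_sub_abs_le_abs_sub _ _
  exact le_of_tendsto' (tendsto_integral_of_L1' _ hVi.abs.1
    (.of_forall fun _ => integrable_condExp.abs) habs) fun _ => integral_abs_condExp_le g

end CondExpLimit

section OptionalSampling

variable {Ω : Type*} {mΩ : MeasurableSpace Ω} {μ : Measure Ω} [IsFiniteMeasure μ]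
  {F : Filtration ℝ≥0 mΩ} {f : ℝ≥0 → Ω → ℝ} {σ : Ω → ℝ≥0} {h : ℝ≥0}

theorem Martingale.exists_tendsto_condExp_of_continuous (hf : Martingale f F μ)
    (hc : ∀ ω, Continuous (f · ω)) (hσ : IsStoppingTime F fun ω => ((σ ω : ℝ≥0) : WithTop ℝ≥0))
    (hσh : ∀ ω, σ ω ≤ h) :
    ∃ 𝓖 : ℕ → MeasurableSpace Ω, (∀ k, 𝓖 k ≤ mΩ) ∧
      ∀ᵐ ω ∂μ, Tendsto (fun k => μ[f h | 𝓖 k] ω) atTop (𝓝 (f (σ ω) ω)) := by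
  set τ : ℕ → Ω → ℝ≥0 := fun k ω => min (dyadicCeil k (σ ω)) h
  have hτ : ∀ k, IsStoppingTime F fun ω => ((τ k ω : ℝ≥0) : WithTop ℝ≥0) := fun k t => by
    simpa only [τ, WithTop.coe_min] using (hσ.dyadicCeil k).min_const h t
  have hτh : ∀ k ω, ((τ k ω : ℝ≥0) : WithTop ℝ≥0) ≤ h := fun k ω =>
    WithTop.coe_le_coe.2 (min_le_right _ _)
  have hτ_countable : ∀ k, (Set.range fun ω => ((τ k ω : ℝ≥0) : WithTop ℝ≥0)).Countable :=
    fun k => (Set.countable_range fun j : ℕ => (((min (j / 2 ^ k) h : ℝ≥0)) : WithTop ℝ≥0)).mono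
      (by rintro _ ⟨ω, rfl⟩; exact ⟨_, rfl⟩)
  refine ⟨fun k => (hτ k).measurableSpace, fun k => (hτ k).measurableSpace_le_of_le (hτh k), ?_⟩
  have hsample := ae_all_iff.2 fun k =>
    hf.stoppedValue_ae_eq_condExp_of_le_const_of_countable_range (hτ k) (hτh k) (hτ_countable k)
  filter_upwards [hsample] with ω hω
  simp_rw [← hω]
  have hτσ : Tendsto (τ · ω) atTop (𝓝 (σ ω)) := by
    simpa [min_eq_left (hσh ω)] using (tendsto_dyadicCeil (σ ω)).min (tendsto_const_nhds (x := h))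
  exact ((hc ω).tendsto _).comp hτσ

theorem Martingale.integrable_stopped_of_continuous (hf : Martingale f F μ)
    (hc : ∀ ω, Continuous (f · ω)) (hσ : IsStoppingTime F fun ω => ((σ ω : ℝ≥0) : WithTop ℝ≥0))
    (hσh : ∀ ω, σ ω ≤ h) : Integrable (fun ω => f (σ ω) ω) μ :=
  let ⟨_, h𝓖, hlim⟩ := hf.exists_tendsto_condExp_of_continuous hc hσ hσh
  (integrable_and_tendsto_eLpNorm_of_tendsto_condExp (hf.integrable h) h𝓖 hlim).1

theorem Martingale.integral_stopped_of_continuous (hf : Martingale f F μ)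
    (hc : ∀ ω, Continuous (f · ω)) (hσ : IsStoppingTime F fun ω => ((σ ω : ℝ≥0) : WithTop ℝ≥0))
    (hσh : ∀ ω, σ ω ≤ h) : ∫ ω, f (σ ω) ω ∂μ = ∫ ω, f h ω ∂μ :=
  let ⟨_, h𝓖, hlim⟩ := hf.exists_tendsto_condExp_of_continuous hc hσ hσh
  integral_eq_of_tendsto_condExp (hf.integrable h) h𝓖 hlim

theorem Martingale.integral_abs_stopped_le_of_continuous (hf : Martingale f F μ)
    (hc : ∀ ω, Continuous (f · ω)) (hσ : IsStoppingTime F fun ω => ((σ ω : ℝ≥0) : WithTop ℝ≥0))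
    (hσh : ∀ ω, σ ω ≤ h) : ∫ ω, |f (σ ω) ω| ∂μ ≤ ∫ ω, |f h ω| ∂μ :=
  let ⟨_, h𝓖, hlim⟩ := hf.exists_tendsto_condExp_of_continuous hc hσ hσh
  integral_abs_le_of_tendsto_condExp (hf.integrable h) h𝓖 hlim

theorem Martingale.integral_stopped_eq_zero_of_continuous (hf : Martingale f F μ)
    (hc : ∀ ω, Continuous (f · ω)) (hf0 : ∀ ω, f 0 ω = 0)
    (hσ : IsStoppingTime F fun ω => ((σ ω : ℝ≥0) : WithTop ℝ≥0)) (hσh : ∀ ω, σ ω ≤ h) :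
    ∫ ω, f (σ ω) ω ∂μ = 0 := by
  rw [hf.integral_stopped_of_continuous hc hσ hσh, ← integral_condExp (F.le 0),
    integral_congr_ae (hf.condExp_ae_eq zero_le)]
  simp [hf0]

theorem Martingale.integral_sq_stopped_eq_of_continuous {N Q : ℝ≥0 → Ω → ℝ}
    (hY : Martingale (fun t ω => N t ω ^ 2 - Q t ω) F μ) (hNc : ∀ ω, Continuous (N · ω))
    (hQc : ∀ ω, Continuous (Q · ω)) (hN0 : ∀ ω, N 0 ω = 0) (hQ0 : ∀ ω, Q 0 ω = 0)
    (hσ : IsStoppingTime F fun ω => ((σ ω : ℝ≥0) : WithTop ℝ≥0)) (hσh : ∀ ω, σ ω ≤ h)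
    (hN2 : Integrable (fun ω => N (σ ω) ω ^ 2) μ) :
    Integrable (fun ω => Q (σ ω) ω) μ ∧ ∫ ω, N (σ ω) ω ^ 2 ∂μ = ∫ ω, Q (σ ω) ω ∂μ := by
  have hYc : ∀ ω, Continuous fun t => N t ω ^ 2 - Q t ω := fun ω => ((hNc ω).pow 2).sub (hQc ω)
  have hQi : Integrable (fun ω => Q (σ ω) ω) μ :=
    (hN2.sub (hY.integrable_stopped_of_continuous hYc hσ hσh)).congr (.of_forall fun ω => by simp)
  refine ⟨hQi, sub_eq_zero.1 ?_⟩
  rw [← integral_sub hN2 hQi]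
  exact hY.integral_stopped_eq_zero_of_continuous hYc (by simp [hN0, hQ0]) hσ hσh

end OptionalSampling

section MomentBound

variable {Ω : Type*} {mΩ : MeasurableSpace Ω} {μ : Measure Ω}

theorem integrable_sq_of_abs_le {X : Ω → ℝ} (hX : Integrable X μ) {c : ℝ}
    (hc : ∀ ω, |X ω| ≤ c) : Integrable (fun ω => X ω ^ 2) μ := by
  refine (hX.abs.const_mul c).mono' (hX.1.pow 2) (.of_forall fun ω => ?_)
  rw [Real.norm_eq_abs, abs_pow, sq]
  exact mul_le_mul_of_nonneg_right (hc ω) (abs_nonneg _)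

theorem half_mul_sqrt_le_integral_abs [IsFiniteMeasure μ] {X Q : Ω → ℝ} {A : Set Ω} {p β : ℝ}
    (hA : MeasurableSet A) (hpA : ENNReal.ofReal p ≤ μ A) (hβ : 0 < β) (hX : Integrable X μ)
    (hXβ : ∀ ω, |X ω| ≤ √β) (hQ : Integrable Q μ) (hQ0 : ∀ ω, 0 ≤ Q ω)
    (hXQ : ∫ ω, X ω ^ 2 ∂μ = ∫ ω, Q ω ∂μ) (hAQ : ∀ ω ∈ A, β ≤ Q ω + X ω ^ 2) :
    p / 2 * √β ≤ ∫ ω, |X ω| ∂μ := by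
  have hX2 := integrable_sq_of_abs_le hX hXβ
  have hp : p ≤ μ.real A := (ENNReal.ofReal_le_iff_le_toReal (measure_ne_top μ A)).1 hpA
  have hbound : β * p ≤ 2 * (√β * ∫ ω, |X ω| ∂μ) := calc
    β * p ≤ β * μ.real A := mul_le_mul_of_nonneg_left hp hβ.le
    _ = ∫ ω, A.indicator (fun _ => β) ω ∂μ := by
      rw [integral_indicator_const _ hA, smul_eq_mul, mul_comm]
    _ ≤ ∫ ω, (Q ω + X ω ^ 2) ∂μ := by
      refine integral_mono ((integrable_const β).indicator hA) (hQ.add hX2) fun ω => ?_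
      by_cases hω : ω ∈ A
      · simpa [hω] using hAQ ω hω
      · simpa [hω] using add_nonneg (hQ0 ω) (sq_nonneg (X ω))
    _ = 2 * ∫ ω, X ω ^ 2 ∂μ := by rw [integral_add hQ hX2, ← hXQ]; ring
    _ ≤ 2 * (√β * ∫ ω, |X ω| ∂μ) := by
      gcongr
      rw [← integral_const_mul]
      refine integral_mono hX2 (hX.abs.const_mul _) fun ω => ?_
      rw [← sq_abs, sq]
      exact mul_le_mul_of_nonneg_right (hXβ ω) (abs_nonneg _)
  have hsqrt : 0 < √β := Real.sqrt_pos.2 hβ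
  have hβ_eq : √β * (p / 2 * √β) = β * p / 2 := by
    linear_combination p / 2 * Real.mul_self_sqrt hβ.le
  exact le_of_mul_le_mul_left (by linarith) hsqrt

end MomentBound

end MeasureTheory

/-- Lemma 3.5 (Lemma `lem:MG`): lower bound on `E|N_h|` for a continuous martingale whose
quadratic variation is at least `β` with probability at least `p`.  The quadratic variation
is axiomatised as a continuous, adapted, nondecreasing process `QV` starting at `0` such
that `N² - QV` is a martingale. -/
theorem stmt_10 (p : ℝ) (hp : p ∈ Set.Ioo (0 : ℝ) 1) :
    ∃ a_p : ℝ, 0 < a_p ∧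
      ∀ {Ω : Type} {mΩ : MeasurableSpace Ω} (μ : Measure Ω) [IsProbabilityMeasure μ]
        (F : Filtration ℝ≥0 mΩ) (N QV : ℝ≥0 → Ω → ℝ),
        Martingale N F μ →
        (∀ ω, Continuous fun t => N t ω) →
        (∀ ω, N 0 ω = 0) →
        Adapted F QV →
        (∀ ω, Continuous fun t => QV t ω) →
        (∀ ω, Monotone fun t => QV t ω) →
        (∀ ω, QV 0 ω = 0) →
        Martingale (fun t ω => (N t ω) ^ 2 - QV t ω) F μ →
        ∀ β : ℝ, 0 < β → ∀ h : ℝ≥0,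
          ENNReal.ofReal p ≤ μ {ω | β ≤ QV h ω} →
          a_p * Real.sqrt β ≤ ∫ ω, |N h ω| ∂μ := by
  refine ⟨p / 2, by linarith [hp.1], ?_⟩
  intro Ω mΩ μ _ F N QV hN hNc hN0 hQVa hQVc hQVm hQV0 hY β hβ h hpA
  have hs : IsClosed {x : ℝ | √β ≤ |x|} := isClosed_le continuous_const continuous_abs
  set σ := hittingBtwn N {x : ℝ | √β ≤ |x|} 0 h
  have hσ : IsStoppingTime F fun ω => ((σ ω : ℝ≥0) : WithTop ℝ≥0) :=
    isStoppingTime_hittingBtwn_of_continuous hN.stronglyAdapted.adapted hNc hs 0 h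
  have hσh : ∀ ω, σ ω ≤ h := fun ω => hittingBtwn_le ω
  have hNσ : ∀ ω, |N (σ ω) ω| ≤ √β := fun ω =>
    abs_hittingBtwn_le (hNc ω) (by simpa [hN0 ω] using hβ) zero_le
  have hNσi := hN.integrable_stopped_of_continuous hNc hσ hσh
  obtain ⟨hQVσi, hN2_eq⟩ := hY.integral_sq_stopped_eq_of_continuous hNc hQVc hN0 hQV0 hσ hσh
    (integrable_sq_of_abs_le hNσi hNσ)
  have hQVσ0 : ∀ ω, 0 ≤ QV (σ ω) ω := fun ω => hQV0 ω ▸ hQVm ω zero_le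
  have hA : ∀ ω ∈ {ω | β ≤ QV h ω}, β ≤ QV (σ ω) ω + N (σ ω) ω ^ 2 := fun ω hω => by
    rcases hittingBtwn_eq_or_mem_set_of_isClosed (n := 0) (m := h) (hNc ω) hs with hσ_eq | hσ_mem
    · rw [show σ ω = h from hσ_eq]
      linarith [hω.out, sq_nonneg (N h ω)]
    · linarith [hQVσ0 ω, sq_abs (N (σ ω) ω), (Real.sqrt_le_left (abs_nonneg _)).1 hσ_mem.out]
  exact (half_mul_sqrt_le_integral_abs (measurableSet_le measurable_const
    ((hQVa h).mono (F.le h) le_rfl)) hpA hβ hNσi hNσ hQVσi hQVσ0 hN2_eq hA).trans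
    (hN.integral_abs_stopped_le_of_continuous hNc hσ hσh)
end

section
/- Let η be a probability measure on ℝ with smooth, rapidly decreasing density f, and let t ∈ ℝ. Then the optimal transport cost between η and its translate by t for the cost function c(x,y) = √|y−x| is at most |t|·∫_ℝ |f'(x)|√|x| dx. -/
/-!
Split the translation by `t` into `n` translations by `s = t / n`. A coupling whose second
marginal has density `g` can be modified into one whose second marginal has density `h` at an
extra cost of at most `∫ |g - h|(y) √|y - c| dy`, for any pivot `c`: leave `min g h` in place
and send the excess `(g - h)₊` to independent points distributed like `(h - g)₊`, routing every
trip through `c` with the triangle inequality for `√|·|`. Chaining `n` such steps along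
`f(· - k s)`, with pivots `k s`, couples `η` with its translate at cost at most
`n ∫ |f(u) - f(u - s)| √|u| du`. By the fundamental theorem of calculus and Tonelli this is at most
`n |s| ∫ |f'(v)| (√|v| + √|s|) dv = |t| ∫ |f'| √|·| + |t|^{3/2} n^{-1/2} ∫ |f'|`; let `n → ∞`.
-/

open MeasureTheory

/-- The measure on ℝ with density `f` with respect to Lebesgue measure. -/
noncomputable def measOfDensity (f : ℝ → ℝ) : Measure ℝ :=
  volume.withDensity fun x => ENNReal.ofReal (f x)

open Set Filter
open scoped ENNReal Interval Topology

namespace SqrtCostTranslation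

section Ratios

variable {α : Type*} {g h : α → ℝ≥0∞}

variable (g h) in
noncomputable def keepRatio (y : α) : ℝ≥0∞ := min (g y) (h y) / g y

variable (g h) in
noncomputable def moveRatio (y : α) : ℝ≥0∞ := (g y - h y) / g y

lemma keepRatio_add_moveRatio {y : α} (h0 : g y ≠ 0) (htop : g y ≠ ∞) :
    keepRatio g h y + moveRatio g h y = 1 := by
  rw [keepRatio, moveRatio, ENNReal.div_add_div_same, add_comm, tsub_add_min,
    ENNReal.div_self h0 htop]

lemma mul_keepRatio {y : α} (htop : g y ≠ ∞) : g y * keepRatio g h y = min (g y) (h y) :=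
  ENNReal.mul_div_cancel' (fun h0 => by simp [h0]) fun h => absurd h htop

lemma mul_moveRatio {y : α} (htop : g y ≠ ∞) : g y * moveRatio g h y = g y - h y :=
  ENNReal.mul_div_cancel' (fun h0 => by simp [h0]) fun h => absurd h htop

end Ratios

section CouplingStep

variable {α β : Type*} [MeasurableSpace α] [MeasurableSpace β] {μ : Measure α} {g h : α → ℝ≥0∞}

lemma lintegral_tsub_comm (hg : Measurable g) (hh : Measurable h)
    (hmass : ∫⁻ y, g y ∂μ = ∫⁻ y, h y ∂μ) (hfin : ∫⁻ y, g y ∂μ ≠ ∞) :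
    ∫⁻ y, g y - h y ∂μ = ∫⁻ y, h y - g y ∂μ := by
  have split : ∀ {a b : α → ℝ≥0∞}, Measurable a → Measurable b →
      ∫⁻ y, a y - b y ∂μ + ∫⁻ y, min (a y) (b y) ∂μ = ∫⁻ y, a y ∂μ := fun ha hb => by
    rw [← lintegral_add_right _ (ha.min hb)]
    exact lintegral_congr fun _ => tsub_add_min
  have hmin : ∫⁻ y, min (g y) (h y) ∂μ ≠ ∞ :=
    ne_top_of_le_ne_top hfin (lintegral_mono fun _ => min_le_left _ _)
  have hgh := split hg hh
  have hhg := split hh hg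
  simp only [min_comm (h _)] at hhg
  exact (ENNReal.add_left_inj hmin).1 (hgh.trans (hmass.trans hhg.symm))

lemma map_snd_withDensity_comp_snd (P : Measure (β × α)) {φ : α → ℝ≥0∞} (hφ : Measurable φ) :
    (P.withDensity fun q => φ q.2).map Prod.snd = (P.map Prod.snd).withDensity φ := by
  ext A hA
  rw [Measure.map_apply measurable_snd hA, withDensity_apply _ hA,
    withDensity_apply _ (hA.preimage measurable_snd), setLIntegral_map hA hφ measurable_snd]

variable (μ g h) in
/-- `(h - g)₊` normalized to a probability measure (when `g = h` a.e. it is `⊤ • 0 = 0`). -/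
noncomputable def refillMeasure : Measure α :=
  (∫⁻ y, g y - h y ∂μ)⁻¹ • μ.withDensity fun y => h y - g y

variable (μ g h) in
noncomputable def couplingStep (P : Measure (β × α)) : Measure (β × α) :=
  P.withDensity (fun q => keepRatio g h q.2) +
    ((P.withDensity fun q => moveRatio g h q.2).prod (refillMeasure μ g h)).map
      fun p => (p.1.1, p.2)

lemma measurable_keepRatio (hg : Measurable g) (hh : Measurable h) :
    Measurable (keepRatio g h) := (hg.min hh).div hg

lemma measurable_moveRatio (hg : Measurable g) (hh : Measurable h) :
    Measurable (moveRatio g h) := (hg.sub hh).div hg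

variable {P : Measure (β × α)}

lemma ae_snd_ne_zero_ne_top (hP : P.map Prod.snd = μ.withDensity g) (hg : Measurable g)
    (hfin : ∫⁻ y, g y ∂μ ≠ ∞) : ∀ᵐ q ∂P, g q.2 ≠ 0 ∧ g q.2 ≠ ∞ := by
  have hfin_ae : ∀ᵐ y ∂μ.withDensity g, g y ≠ ∞ :=
    withDensity_absolutelyContinuous μ g ((ae_lt_top hg hfin).mono fun _ => ne_of_lt)
  have hpos_ae : ∀ᵐ y ∂μ.withDensity g, g y ≠ 0 :=
    (ae_withDensity_iff hg).2 (ae_of_all _ fun _ => id)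
  rw [← hP] at hfin_ae hpos_ae
  exact ae_of_ae_map measurable_snd.aemeasurable (hpos_ae.and hfin_ae)

lemma withDensity_keepRatio_add_withDensity_moveRatio (hP : P.map Prod.snd = μ.withDensity g)
    (hg : Measurable g) (hh : Measurable h) (hfin : ∫⁻ y, g y ∂μ ≠ ∞) :
    P.withDensity (fun q => keepRatio g h q.2) + P.withDensity (fun q => moveRatio g h q.2) =
      P := by
  have hk : Measurable fun q : β × α => keepRatio g h q.2 :=
    (measurable_keepRatio hg hh).comp measurable_snd
  rw [← withDensity_add_left hk]
  conv_rhs => rw [← withDensity_one (μ := P)]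
  refine withDensity_congr_ae ?_
  filter_upwards [ae_snd_ne_zero_ne_top hP hg hfin] with q hq
  exact keepRatio_add_moveRatio hq.1 hq.2

lemma lintegral_withDensity_moveRatio (hP : P.map Prod.snd = μ.withDensity g)
    (hg : Measurable g) (hh : Measurable h) (hfin : ∫⁻ y, g y ∂μ ≠ ∞) {ψ : α → ℝ≥0∞}
    (hψ : Measurable ψ) :
    ∫⁻ q, ψ q.2 ∂P.withDensity (fun q => moveRatio g h q.2) = ∫⁻ y, (g y - h y) * ψ y ∂μ := by
  have hm := measurable_moveRatio hg hh
  rw [← lintegral_map hψ measurable_snd, map_snd_withDensity_comp_snd P hm, hP,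
    ← withDensity_mul μ hg hm, lintegral_withDensity_eq_lintegral_mul _ (hg.mul hm) hψ]
  refine lintegral_congr_ae ?_
  filter_upwards [ae_lt_top hg hfin] with y hy
  simp only [Pi.mul_apply, mul_moveRatio hy.ne]

lemma smul_refillMeasure (hg : Measurable g) (hh : Measurable h)
    (hmass : ∫⁻ y, g y ∂μ = ∫⁻ y, h y ∂μ) (hfin : ∫⁻ y, g y ∂μ ≠ ∞) :
    (∫⁻ y, g y - h y ∂μ) • refillMeasure μ g h = μ.withDensity fun y => h y - g y := by
  rw [refillMeasure, smul_smul]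
  rcases eq_or_ne (∫⁻ y, g y - h y ∂μ) 0 with hm | hm
  · have : μ.withDensity (fun y => h y - g y) Set.univ = 0 := by
      rw [withDensity_apply _ MeasurableSet.univ, Measure.restrict_univ,
        ← lintegral_tsub_comm hg hh hmass hfin, hm]
    rw [hm, zero_mul, zero_smul, Measure.measure_univ_eq_zero.1 this]
  · have hm_top : ∫⁻ y, g y - h y ∂μ ≠ ∞ :=
      ne_top_of_le_ne_top hfin (lintegral_mono fun _ => tsub_le_self)
    rw [ENNReal.mul_inv_cancel hm hm_top, one_smul]

lemma withDensity_moveRatio_univ (hP : P.map Prod.snd = μ.withDensity g)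
    (hg : Measurable g) (hh : Measurable h) (hfin : ∫⁻ y, g y ∂μ ≠ ∞) :
    P.withDensity (fun q => moveRatio g h q.2) univ = ∫⁻ y, g y - h y ∂μ := by
  simpa using lintegral_withDensity_moveRatio hP hg hh hfin (ψ := fun _ => 1) measurable_const

lemma refillMeasure_univ_smul (hP : P.map Prod.snd = μ.withDensity g)
    (hg : Measurable g) (hh : Measurable h) (hmass : ∫⁻ y, g y ∂μ = ∫⁻ y, h y ∂μ)
    (hfin : ∫⁻ y, g y ∂μ ≠ ∞) :
    refillMeasure μ g h univ • P.withDensity (fun q => moveRatio g h q.2) =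
      P.withDensity (fun q => moveRatio g h q.2) := by
  have hσ := withDensity_moveRatio_univ hP hg hh hfin
  rcases eq_or_ne (∫⁻ y, g y - h y ∂μ) 0 with hm | hm
  · rw [Measure.measure_univ_eq_zero.1 (hσ.trans hm), smul_zero]
  · have hm_top : ∫⁻ y, g y - h y ∂μ ≠ ∞ :=
      ne_top_of_le_ne_top hfin (lintegral_mono fun _ => tsub_le_self)
    rw [refillMeasure, Measure.smul_apply, withDensity_apply _ MeasurableSet.univ,
      Measure.restrict_univ, ← lintegral_tsub_comm hg hh hmass hfin, smul_eq_mul,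
      ENNReal.inv_mul_cancel hm hm_top, one_smul]

lemma measurable_fst_fst_snd : Measurable fun p : (β × α) × α => (p.1.1, p.2) := by fun_prop

variable [SFinite μ]

instance : SFinite (refillMeasure μ g h) := by unfold refillMeasure; infer_instance

lemma map_fst_couplingStep (hP : P.map Prod.snd = μ.withDensity g)
    (hg : Measurable g) (hh : Measurable h) (hmass : ∫⁻ y, g y ∂μ = ∫⁻ y, h y ∂μ)
    (hfin : ∫⁻ y, g y ∂μ ≠ ∞) :
    (couplingStep μ g h P).map Prod.fst = P.map Prod.fst := by
  have hcomp : (Prod.fst ∘ fun p : (β × α) × α => (p.1.1, p.2)) = Prod.fst ∘ Prod.fst := rfl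
  rw [couplingStep, Measure.map_add _ _ measurable_fst,
    Measure.map_map measurable_fst measurable_fst_fst_snd, hcomp,
    ← Measure.map_map measurable_fst measurable_fst, Measure.map_fst_prod,
    refillMeasure_univ_smul hP hg hh hmass hfin, ← Measure.map_add _ _ measurable_fst,
    withDensity_keepRatio_add_withDensity_moveRatio hP hg hh hfin]

lemma map_snd_couplingStep (hP : P.map Prod.snd = μ.withDensity g)
    (hg : Measurable g) (hh : Measurable h) (hmass : ∫⁻ y, g y ∂μ = ∫⁻ y, h y ∂μ)
    (hfin : ∫⁻ y, g y ∂μ ≠ ∞) :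
    (couplingStep μ g h P).map Prod.snd = μ.withDensity h := by
  have hcomp : (Prod.snd ∘ fun p : (β × α) × α => (p.1.1, p.2)) = Prod.snd := rfl
  have hk := measurable_keepRatio hg hh
  rw [couplingStep, Measure.map_add _ _ measurable_snd, map_snd_withDensity_comp_snd P hk, hP,
    ← withDensity_mul μ hg hk, Measure.map_map measurable_snd measurable_fst_fst_snd, hcomp,
    Measure.map_snd_prod, withDensity_moveRatio_univ hP hg hh hfin,
    smul_refillMeasure hg hh hmass hfin, ← withDensity_add_left (hg.mul hk)]
  refine withDensity_congr_ae ?_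
  filter_upwards [ae_lt_top hg hfin] with y hy
  rw [Pi.add_apply, Pi.mul_apply, mul_keepRatio hy.ne, add_comm, min_comm, tsub_add_min]

variable {d : α → α → ℝ≥0∞}

lemma lintegral_couplingStep_le (hd : Measurable (Function.uncurry d))
    (hsymm : ∀ x y, d x y = d y x) (htri : ∀ x y z, d x z ≤ d x y + d y z)
    {P : Measure (α × α)} (hP : P.map Prod.snd = μ.withDensity g)
    (hg : Measurable g) (hh : Measurable h) (hmass : ∫⁻ y, g y ∂μ = ∫⁻ y, h y ∂μ)
    (hfin : ∫⁻ y, g y ∂μ ≠ ∞) (c : α) :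
    ∫⁻ q, d q.1 q.2 ∂couplingStep μ g h P ≤
      ∫⁻ q, d q.1 q.2 ∂P + ∫⁻ y, (g y - h y + (h y - g y)) * d c y ∂μ := by
  set κ := P.withDensity fun q => keepRatio g h q.2
  set σ := P.withDensity fun q => moveRatio g h q.2
  have hcost : Measurable fun q : α × α => d q.1 q.2 := hd
  have hdc : Measurable (d c) := hd.comp (measurable_const.prodMk measurable_id)
  have hd_c : Measurable fun y => d y c := hd.comp (measurable_id.prodMk measurable_const)
  have hhg : Measurable fun y => h y - g y := hh.sub hg
  have hgh : Measurable fun y => (g y - h y) * d y c := (hg.sub hh).mul hd_c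
  have hG : Measurable fun q : α × α => d q.1 q.2 + d q.2 c := hcost.add (hd_c.comp measurable_snd)
  have hpt : ∀ p : (α × α) × α, d p.1.1 p.2 ≤ (d p.1.1 p.1.2 + d p.1.2 c) + d c p.2 :=
    fun p => (htri _ p.1.2 _).trans (by rw [add_assoc]; gcongr; exact htri _ _ _)
  calc ∫⁻ q, d q.1 q.2 ∂couplingStep μ g h P
      = ∫⁻ q, d q.1 q.2 ∂κ + ∫⁻ p, d p.1.1 p.2 ∂σ.prod (refillMeasure μ g h) := by
        rw [couplingStep, lintegral_add_measure, lintegral_map hcost measurable_fst_fst_snd]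
    _ ≤ ∫⁻ q, d q.1 q.2 ∂κ + (∫⁻ p, d p.1.1 p.1.2 + d p.1.2 c ∂σ.prod (refillMeasure μ g h)
          + ∫⁻ p, d c p.2 ∂σ.prod (refillMeasure μ g h)) := by
        gcongr
        exact (lintegral_mono hpt).trans_eq (lintegral_add_left (hG.comp measurable_fst) _)
    _ = ∫⁻ q, d q.1 q.2 ∂κ + (∫⁻ q, d q.1 q.2 + d q.2 c ∂σ
          + ∫⁻ y, (h y - g y) * d c y ∂μ) := by
        rw [← lintegral_map hG measurable_fst, ← lintegral_map hdc measurable_snd,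
          Measure.map_fst_prod, Measure.map_snd_prod, refillMeasure_univ_smul hP hg hh hmass hfin,
          withDensity_moveRatio_univ hP hg hh hfin, smul_refillMeasure hg hh hmass hfin,
          lintegral_withDensity_eq_lintegral_mul _ hhg hdc]
        rfl
    _ = ∫⁻ q, d q.1 q.2 ∂κ + ∫⁻ q, d q.1 q.2 ∂σ
          + (∫⁻ y, (g y - h y) * d y c ∂μ + ∫⁻ y, (h y - g y) * d c y ∂μ) := by
        rw [lintegral_add_left hcost, lintegral_withDensity_moveRatio hP hg hh hfin hd_c]
        ring
    _ = ∫⁻ q, d q.1 q.2 ∂P + ∫⁻ y, (g y - h y + (h y - g y)) * d c y ∂μ := by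
        rw [← lintegral_add_measure, withDensity_keepRatio_add_withDensity_moveRatio hP hg hh hfin,
          ← lintegral_add_left hgh]
        simp only [hsymm _ c, add_mul]

theorem exists_coupling_le_sum (hd : Measurable (Function.uncurry d)) (hd0 : ∀ x, d x x = 0)
    (hsymm : ∀ x y, d x y = d y x) (htri : ∀ x y z, d x z ≤ d x y + d y z)
    {g : ℕ → α → ℝ≥0∞} (hg : ∀ k, Measurable (g k))
    (hmass : ∀ k, ∫⁻ y, g k y ∂μ = ∫⁻ y, g 0 y ∂μ) (hfin : ∫⁻ y, g 0 y ∂μ ≠ ∞)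
    (c : ℕ → α) (n : ℕ) :
    ∃ P : Measure (α × α), P.map Prod.fst = μ.withDensity (g 0) ∧
      P.map Prod.snd = μ.withDensity (g n) ∧
      ∫⁻ q, d q.1 q.2 ∂P ≤
        ∑ k ∈ Finset.range n,
          ∫⁻ y, (g k y - g (k + 1) y + (g (k + 1) y - g k y)) * d (c k) y ∂μ := by
  induction n with
  | zero =>
    have hdiag : Measurable fun x : α => (x, x) := measurable_id.prodMk measurable_id
    refine ⟨(μ.withDensity (g 0)).map fun x => (x, x), ?_, ?_, ?_⟩
    · rw [Measure.map_map measurable_fst hdiag]; exact Measure.map_id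
    · rw [Measure.map_map measurable_snd hdiag]; exact Measure.map_id
    · rw [lintegral_map (f := fun q : α × α => d q.1 q.2) hd hdiag]; simp [hd0]
  | succ n ih =>
    obtain ⟨P, hfst, hsnd, hcost⟩ := ih
    have hmass' : ∫⁻ y, g n y ∂μ = ∫⁻ y, g (n + 1) y ∂μ := (hmass n).trans (hmass (n + 1)).symm
    have hfin' : ∫⁻ y, g n y ∂μ ≠ ∞ := hmass n ▸ hfin
    refine ⟨couplingStep μ (g n) (g (n + 1)) P,
      (map_fst_couplingStep hsnd (hg n) (hg _) hmass' hfin').trans hfst,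
      map_snd_couplingStep hsnd (hg n) (hg _) hmass' hfin', ?_⟩
    rw [Finset.sum_range_succ]
    exact (lintegral_couplingStep_le hd hsymm htri hsnd (hg n) (hg _) hmass' hfin' (c n)).trans
      (add_le_add_left hcost _)

end CouplingStep

section SqrtCost

lemma sqrt_add_le_sqrt_add_sqrt {a b : ℝ} (ha : 0 ≤ a) (hb : 0 ≤ b) : √(a + b) ≤ √a + √b := by
  rw [Real.sqrt_le_left (by positivity)]
  nlinarith [Real.sq_sqrt ha, Real.sq_sqrt hb, Real.sqrt_nonneg a, Real.sqrt_nonneg b]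

lemma sqrt_abs_sub_le (x y z : ℝ) : √|z - x| ≤ √|y - x| + √|z - y| := by
  calc √|z - x| ≤ √(|y - x| + |z - y|) := Real.sqrt_le_sqrt (by
        simpa [add_comm] using abs_sub_le z y x)
    _ ≤ √|y - x| + √|z - y| := sqrt_add_le_sqrt_add_sqrt (abs_nonneg _) (abs_nonneg _)

noncomputable def sqrtCost (x y : ℝ) : ℝ≥0∞ := ENNReal.ofReal √|y - x|

lemma measurable_sqrtCost : Measurable (Function.uncurry sqrtCost) :=
  (Real.continuous_sqrt.comp (continuous_snd.sub continuous_fst).abs).measurable.ennreal_ofReal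

lemma sqrtCost_self (x : ℝ) : sqrtCost x x = 0 := by simp [sqrtCost]

lemma sqrtCost_comm (x y : ℝ) : sqrtCost x y = sqrtCost y x := by
  rw [sqrtCost, sqrtCost, abs_sub_comm]

lemma sqrtCost_triangle (x y z : ℝ) : sqrtCost x z ≤ sqrtCost x y + sqrtCost y z := by
  rw [sqrtCost, sqrtCost, sqrtCost, ← ENNReal.ofReal_add (Real.sqrt_nonneg _) (Real.sqrt_nonneg _)]
  exact ENNReal.ofReal_le_ofReal (sqrt_abs_sub_le x y z)

end SqrtCost

lemma map_add_right_withDensity {G : Type*} [AddGroup G] [MeasurableSpace G] [MeasurableAdd G]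
    (μ : Measure G) [μ.IsAddRightInvariant] {g : G → ℝ≥0∞} (hg : Measurable g) (t : G) :
    (μ.withDensity g).map (· + t) = μ.withDensity fun x => g (x - t) := by
  have hg' : Measurable fun x => g (x - t) := by
    simp_rw [sub_eq_add_neg]
    exact hg.comp (measurable_add_const _)
  ext s hs
  rw [Measure.map_apply (measurable_add_const t) hs, withDensity_apply _ hs,
    withDensity_apply _ (hs.preimage (measurable_add_const t)),
    ← (measurePreserving_add_right μ t).setLIntegral_comp_preimage hs hg']
  simp only [add_sub_cancel_right]

lemma ofReal_sub_add_ofReal_sub_le (a b : ℝ) :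
    ENNReal.ofReal a - ENNReal.ofReal b + (ENNReal.ofReal b - ENNReal.ofReal a) ≤ ‖a - b‖ₑ := by
  wlog hab : a ≤ b generalizing a b
  · simpa [add_comm, enorm_sub_rev] using this b a (le_of_not_ge hab)
  rw [tsub_eq_zero_of_le (ENNReal.ofReal_le_ofReal hab), zero_add, enorm_sub_rev,
    Real.enorm_eq_ofReal_abs, abs_of_nonneg (sub_nonneg.2 hab)]
  rcases le_total 0 a with ha | ha
  · rw [ENNReal.ofReal_sub _ ha]
  · rw [ENNReal.ofReal_of_nonpos ha, tsub_zero]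
    exact ENNReal.ofReal_le_ofReal (by linarith)

theorem exists_coupling_translate_le {f : ℝ → ℝ} (hf : Measurable f)
    (hfin : ∫⁻ x, ENNReal.ofReal (f x) ≠ ∞) (s : ℝ) (n : ℕ) :
    ∃ P : Measure (ℝ × ℝ), P.map Prod.fst = measOfDensity f ∧
      P.map Prod.snd = (measOfDensity f).map (· + n * s) ∧
      ∫⁻ q, sqrtCost q.1 q.2 ∂P ≤ n * ∫⁻ u, ‖f u - f (u - s)‖ₑ * ENNReal.ofReal √|u| := by
  have hg : ∀ k : ℕ, Measurable fun y => ENNReal.ofReal (f (y - k * s)) := fun k =>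
    (hf.comp (measurable_sub_const _)).ennreal_ofReal
  obtain ⟨P, hfst, hsnd, hcost⟩ := exists_coupling_le_sum measurable_sqrtCost sqrtCost_self
    sqrtCost_comm sqrtCost_triangle (g := fun k y => ENNReal.ofReal (f (y - k * s))) hg
    (fun k => (lintegral_sub_right_eq_self (fun y => ENNReal.ofReal (f y)) _).trans
      (lintegral_sub_right_eq_self (fun y => ENNReal.ofReal (f y)) _).symm)
    (by simpa using hfin) (fun k => k * s) n
  refine ⟨P, by simpa [measOfDensity] using hfst, ?_, hcost.trans ?_⟩
  · rw [hsnd, measOfDensity, map_add_right_withDensity volume hf.ennreal_ofReal]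
  · set E := ∫⁻ u, ‖f u - f (u - s)‖ₑ * ENNReal.ofReal √|u|
    calc _ ≤ ∑ _k ∈ Finset.range n, E := Finset.sum_le_sum fun k _ => ?_
      _ = n * E := by rw [Finset.sum_const, Finset.card_range, nsmul_eq_mul]
    refine (lintegral_mono fun y => ?_).trans_eq
      (lintegral_sub_right_eq_self (fun u => ‖f u - f (u - s)‖ₑ * ENNReal.ofReal √|u|) (k * s))
    have hshift : y - ((k + 1 : ℕ) : ℝ) * s = y - k * s - s := by push_cast; ring
    rw [hshift]
    exact mul_le_mul_left (ofReal_sub_add_ofReal_sub_le _ _) _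

lemma enorm_sub_le_lintegral_enorm_deriv {f : ℝ → ℝ} (hf : Differentiable ℝ f)
    (hf' : Integrable (deriv f)) {a b : ℝ} : ‖f b - f a‖ₑ ≤ ∫⁻ v in Ι a b, ‖deriv f v‖ₑ := by
  rw [← intervalIntegral.integral_deriv_eq_sub (fun x _ => hf x) hf'.intervalIntegrable,
    ← ofReal_norm, intervalIntegral.norm_integral_eq_norm_integral_uIoc, ofReal_norm]
  exact enorm_integral_le_lintegral_enorm _

lemma mem_uIcc_add_of_mem_uIoc_sub {u v s : ℝ} (h : v ∈ Ι (u - s) u) : u ∈ uIcc v (v + s) := by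
  rcases Set.mem_uIcc.1 (uIoc_subset_uIcc h) with ⟨h1, h2⟩ | ⟨h1, h2⟩
  · exact Set.mem_uIcc.2 (Or.inl ⟨by linarith, by linarith⟩)
  · exact Set.mem_uIcc.2 (Or.inr ⟨by linarith, by linarith⟩)

theorem lintegral_enorm_sub_shift_mul_le {f : ℝ → ℝ} (hf : Differentiable ℝ f)
    (hf' : Integrable (deriv f)) (s : ℝ) {w W : ℝ → ℝ≥0∞} (hw : Measurable w)
    (hW : ∀ u v, |u - v| ≤ |s| → w u ≤ W v) :
    ∫⁻ u, ‖f u - f (u - s)‖ₑ * w u ≤ ‖s‖ₑ * ∫⁻ v, ‖deriv f v‖ₑ * W v := by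
  set S : Set (ℝ × ℝ) := {p | p.2 ∈ Ι (p.1 - s) p.1}
  have hS : MeasurableSet S := show MeasurableSet
      ({p : ℝ × ℝ | min (p.1 - s) p.1 < p.2} ∩ {p | p.2 ≤ max (p.1 - s) p.1}) from
    (measurableSet_lt (by fun_prop) (by fun_prop)).inter
      (measurableSet_le (by fun_prop) (by fun_prop))
  set F : ℝ × ℝ → ℝ≥0∞ := S.indicator fun p => ‖deriv f p.2‖ₑ * w p.1
  have hF : Measurable F :=
    (((measurable_deriv f).comp measurable_snd).enorm.mul (hw.comp measurable_fst)).indicator hS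
  have hftc : ∀ u, ‖f u - f (u - s)‖ₑ * w u ≤ ∫⁻ v, F (u, v) := by
    intro u
    calc ‖f u - f (u - s)‖ₑ * w u ≤ (∫⁻ v in Ι (u - s) u, ‖deriv f v‖ₑ) * w u := by
          gcongr; exact enorm_sub_le_lintegral_enorm_deriv hf hf'
      _ = ∫⁻ v, F (u, v) := by
        rw [← lintegral_indicator measurableSet_uIoc, ← lintegral_mul_const _
          ((measurable_deriv f).enorm.indicator measurableSet_uIoc)]
        refine lintegral_congr fun v => ?_
        by_cases hv : v ∈ Ι (u - s) u <;> simp [F, S, hv]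
  have hwin : ∀ v, ∫⁻ u, F (u, v) ≤ ‖deriv f v‖ₑ * W v * ‖s‖ₑ := by
    intro v
    calc ∫⁻ u, F (u, v)
        ≤ ∫⁻ u, (uIcc v (v + s)).indicator (fun _ => ‖deriv f v‖ₑ * W v) u :=
          lintegral_mono fun u => ?_
      _ = ‖deriv f v‖ₑ * W v * ‖s‖ₑ := by
          rw [lintegral_indicator_const measurableSet_uIcc, Real.volume_interval,
            add_sub_cancel_left, ← Real.enorm_eq_ofReal_abs]
    by_cases hu : v ∈ Ι (u - s) u
    · have hmem := mem_uIcc_add_of_mem_uIoc_sub hu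
      have hdist : |u - v| ≤ |s| := by simpa using abs_sub_left_of_mem_uIcc hmem
      simp only [F, S, indicator_of_mem (show (u, v) ∈ S from hu), indicator_of_mem hmem]
      gcongr
      exact hW u v hdist
    · simp [F, S, hu]
  calc ∫⁻ u, ‖f u - f (u - s)‖ₑ * w u ≤ ∫⁻ u, ∫⁻ v, F (u, v) := lintegral_mono hftc
    _ = ∫⁻ v, ∫⁻ u, F (u, v) := lintegral_lintegral_swap hF.aemeasurable
    _ ≤ ∫⁻ v, ‖deriv f v‖ₑ * W v * ‖s‖ₑ := lintegral_mono hwin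
    _ = ‖s‖ₑ * ∫⁻ v, ‖deriv f v‖ₑ * W v := by rw [lintegral_mul_const' _ _ enorm_ne_top, mul_comm]

lemma lintegral_enorm_sub_shift_mul_sqrt_le {f : ℝ → ℝ} (hf : Differentiable ℝ f)
    (hf' : Integrable (deriv f)) (hA : Integrable fun x => |deriv f x| * √|x|) (s : ℝ) :
    ∫⁻ u, ‖f u - f (u - s)‖ₑ * ENNReal.ofReal √|u| ≤
      ENNReal.ofReal (|s| * ((∫ x, |deriv f x| * √|x|) + √|s| * ∫ x, |deriv f x|)) := by
  have hW : ∀ u v, |u - v| ≤ |s| → ENNReal.ofReal √|u| ≤ ENNReal.ofReal (√|v| + √|s|) := by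
    intro u v huv
    refine ENNReal.ofReal_le_ofReal ?_
    calc √|u| ≤ √(|v| + |u - v|) := Real.sqrt_le_sqrt (by linarith [abs_sub_abs_le_abs_sub u v])
      _ ≤ √|v| + √|u - v| := sqrt_add_le_sqrt_add_sqrt (abs_nonneg _) (abs_nonneg _)
      _ ≤ √|v| + √|s| := by gcongr
  have hint : Integrable fun v => |deriv f v| * (√|v| + √|s|) := by
    refine (hA.add (hf'.abs.mul_const √|s|)).congr (ae_of_all _ fun v => ?_)
    simp only [Pi.add_apply, mul_add]
  refine (lintegral_enorm_sub_shift_mul_le hf hf' s (by fun_prop) hW).trans_eq ?_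
  have hlin : ∫⁻ v, ‖deriv f v‖ₑ * ENNReal.ofReal (√|v| + √|s|) =
      ENNReal.ofReal (∫ v, |deriv f v| * (√|v| + √|s|)) := by
    rw [ofReal_integral_eq_lintegral_ofReal hint (ae_of_all _ fun v => by positivity)]
    refine lintegral_congr fun v => ?_
    rw [ENNReal.ofReal_mul (abs_nonneg _), Real.enorm_eq_ofReal_abs]
  rw [hlin, Real.enorm_eq_ofReal_abs, ← ENNReal.ofReal_mul (abs_nonneg _)]
  simp only [mul_add, integral_add hA (hf'.abs.mul_const √|s|), integral_mul_const]
  ring_nf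

lemma integrable_norm_mul_sqrt_abs {F : Type*} [NormedAddCommGroup F] [NormedSpace ℝ F]
    (φ : SchwartzMap ℝ F) : Integrable fun x => ‖φ x‖ * √|x| := by
  refine (φ.integrable.norm.add (φ.integrable_pow_mul volume 1)).mono' (by fun_prop)
    (ae_of_all _ fun x => ?_)
  have hsqrt : √|x| ≤ 1 + |x| := by
    nlinarith [Real.sq_sqrt (abs_nonneg x), Real.sqrt_nonneg |x|, sq_nonneg (√|x| - 1)]
  rw [Real.norm_eq_abs, abs_of_nonneg (by positivity)]
  simp only [Pi.add_apply, pow_one, Real.norm_eq_abs]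
  nlinarith [norm_nonneg (φ x)]

lemma le_of_forall_le_add_mul_sqrt_div {x a b c : ℝ} (h : ∀ n : ℕ, x ≤ a + b * √(c / (n + 1))) :
    x ≤ a := by
  have hc : Tendsto (fun n : ℕ => c / ((n : ℝ) + 1)) atTop (𝓝 0) :=
    tendsto_const_nhds.div_atTop (tendsto_atTop_add_const_right _ 1 tendsto_natCast_atTop_atTop)
  have hlim := (tendsto_const_nhds (x := a) (f := atTop (α := ℕ))).add
    (((Real.continuous_sqrt.tendsto 0).comp hc).const_mul b)
  simp only [Real.sqrt_zero, mul_zero, add_zero] at hlim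
  exact ge_of_tendsto hlim (Eventually.of_forall h)

lemma sInf_cost_le {η ν : Measure ℝ} [IsProbabilityMeasure η] {P : Measure (ℝ × ℝ)}
    (hfst : P.map Prod.fst = η) (hsnd : P.map Prod.snd = ν) :
    sInf {c : ℝ | ∃ π : Measure (ℝ × ℝ), IsProbabilityMeasure π ∧
        π.map Prod.fst = η ∧ π.map Prod.snd = ν ∧ c = ∫ q, √|q.2 - q.1| ∂π} ≤
      (∫⁻ q, sqrtCost q.1 q.2 ∂P).toReal := by
  have : IsProbabilityMeasure (P.map Prod.fst) := hfst ▸ ‹_›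
  have := Measure.isProbabilityMeasure_of_map (μ := P) Prod.fst
  refine csInf_le ⟨0, ?_⟩ ⟨P, this, hfst, hsnd, ?_⟩
  · rintro _ ⟨π, -, -, -, rfl⟩
    exact integral_nonneg fun _ => Real.sqrt_nonneg _
  · exact (integral_eq_lintegral_of_nonneg_ae (f := fun q : ℝ × ℝ => √|q.2 - q.1|)
      (ae_of_all _ fun _ => Real.sqrt_nonneg _)
      (Real.continuous_sqrt.comp (continuous_snd.sub continuous_fst).abs).aestronglyMeasurable).symm

end SqrtCostTranslation

open SqrtCostTranslation

/-- Lemma 5.2 (`lem:sqrt`): the optimal transport cost, for the cost `√|y - x|`, between a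
probability measure `η` with rapidly decreasing smooth density `f` and its translate by `t`
is at most `|t| ∫ |f'(x)| √|x| dx`. -/
theorem stmt_12 (f : SchwartzMap ℝ ℝ) (hf0 : ∀ x, 0 ≤ f x) (hf1 : ∫ x, f x = 1) (t : ℝ) :
    sInf {c : ℝ | ∃ π : Measure (ℝ × ℝ), IsProbabilityMeasure π ∧
        π.map Prod.fst = measOfDensity f ∧
        π.map Prod.snd = (measOfDensity f).map (fun x => x + t) ∧
        c = ∫ q, Real.sqrt |q.2 - q.1| ∂π}
      ≤ |t| * ∫ x, |deriv f x| * Real.sqrt |x| := by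
  have hf' : Integrable (deriv f) :=
    (SchwartzMap.derivCLM ℝ ℝ f).integrable.congr (ae_of_all _ (SchwartzMap.derivCLM_apply ℝ f))
  have hA : Integrable fun x => |deriv f x| * √|x| := by
    simpa only [Real.norm_eq_abs, SchwartzMap.derivCLM_apply] using
      integrable_norm_mul_sqrt_abs (SchwartzMap.derivCLM ℝ ℝ f)
  have hmass : ∫⁻ x, ENNReal.ofReal (f x) = 1 := by
    rw [← ofReal_integral_eq_lintegral_ofReal f.integrable (ae_of_all _ hf0), hf1,
      ENNReal.ofReal_one]
  have : IsProbabilityMeasure (measOfDensity f) :=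
    ⟨by rw [measOfDensity, withDensity_apply _ MeasurableSet.univ, Measure.restrict_univ, hmass]⟩
  refine le_of_forall_le_add_mul_sqrt_div (b := |t| * ∫ x, |deriv f x|) (c := |t|) fun n => ?_
  set s := t / (n + 1)
  obtain ⟨P, hfst, hsnd, hcost⟩ :=
    exists_coupling_translate_le f.continuous.measurable (by simp [hmass]) s (n + 1)
  have hns : ((n + 1 : ℕ) : ℝ) * s = t := by simp only [s]; push_cast; field_simp
  rw [hns] at hsnd
  refine (sInf_cost_le hfst hsnd).trans (ENNReal.toReal_le_of_le_ofReal (by positivity) ?_)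
  refine hcost.trans ((mul_le_mul' le_rfl
    (lintegral_enorm_sub_shift_mul_sqrt_le f.differentiable hf' hA s)).trans_eq ?_)
  have hs : |s| = |t| / (n + 1) := by rw [abs_div, abs_of_pos (by positivity : (0 : ℝ) < n + 1)]
  rw [← ENNReal.ofReal_natCast, ← ENNReal.ofReal_mul (by positivity), hs]
  congr 1
  push_cast
  field_simp
end

section
/- Let W be a standard one-dimensional Brownian motion started at r₀ with 0 < r₀ ≤ 1, T₀ its hitting time of 0. Then there exist constants a, b > 0, independent of r₀, such that for all y ≥ 1, ℙ(sup_{0≤s≤1} W_s ≥ y | T₀ = 1) ≤ a·exp(−b y²). -/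
/-!
Pairing the terms `k` and `-k` of the series (the term `k = 0` is `1`) writes
`1 - ∑ₖ` as `∑_{k ≥ 1} (e^{-u²/2}/r) ((u - r) e^{ru} - (u + r) e^{-ru})` with `u = 2ky`.
Since `e^{ru} - e^{-ru} ≤ 2ru e^{ru}`, the factor `1/r` cancels, so each pair is at most
`2u² e^{u - u²/2} ≤ 2e⁹ e^{-k²y²}` uniformly in `r ∈ (0, 1]`, and comparing with the geometric
series `e^{-y²} e^{-(k-1)}` gives the bound `4e⁹ e^{-y²}`.
-/

open Real

-- `∑ₖ reflectionTerm r y k` is `ℙ(sup_{s ≤ T₀} W_s < y | T₀ = 1)` for `W₀ = r` (method of images).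
noncomputable def reflectionTerm (r y : ℝ) (k : ℤ) : ℝ :=
  ((r + 2 * k * y) / r) * exp (-(((r + 2 * k * y) ^ 2 - r ^ 2) / 2))

lemma reflectionTerm_zero {r : ℝ} (hr : r ≠ 0) (y : ℝ) : reflectionTerm r y 0 = 1 := by
  simp [reflectionTerm, hr]

lemma one_add_sq_mul_exp_sub_le {s : ℝ} (hs : 0 ≤ s) :
    (1 + s) ^ 2 * exp (s - s ^ 2 / 2) ≤ exp 9 * exp (-(s ^ 2 / 4)) := by
  have h : (1 + s) ^ 2 ≤ exp (2 * s) := by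
    rw [two_mul, exp_add, ← sq]
    exact pow_le_pow_left₀ (by linarith) (by linarith [add_one_le_exp s]) 2
  calc (1 + s) ^ 2 * exp (s - s ^ 2 / 2) ≤ exp (2 * s) * exp (s - s ^ 2 / 2) := by gcongr
    _ ≤ exp 9 * exp (-(s ^ 2 / 4)) := by
      rw [← exp_add, ← exp_add]
      exact exp_le_exp.2 (by nlinarith [sq_nonneg (s - 6)])

lemma abs_reflectionTerm_le {r : ℝ} (hr : 0 < r) (hr1 : r ≤ 1) (y : ℝ) (k : ℤ) :
    |reflectionTerm r y k| ≤ exp 9 / r * exp (-(k * y) ^ 2) := by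
  set t : ℝ := 2 * k * y with ht
  have hnum : |r + t| ≤ (1 + |t|) ^ 2 := by
    nlinarith [abs_add_le r t, abs_of_pos hr, abs_nonneg t]
  have hexp : -(((r + t) ^ 2 - r ^ 2) / 2) ≤ |t| - |t| ^ 2 / 2 := by
    nlinarith [neg_abs_le t, sq_abs t, abs_nonneg t]
  calc |reflectionTerm r y k| = |r + t| / r * exp (-(((r + t) ^ 2 - r ^ 2) / 2)) := by
        rw [reflectionTerm, abs_mul, abs_div, abs_of_pos hr, abs_of_pos (exp_pos _)]
    _ ≤ (1 + |t|) ^ 2 * exp (|t| - |t| ^ 2 / 2) / r := by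
        rw [div_mul_eq_mul_div]; gcongr
    _ ≤ exp 9 * exp (-(|t| ^ 2 / 4)) / r := by
        gcongr ?_ / r; exact one_add_sq_mul_exp_sub_le (abs_nonneg t)
    _ = exp 9 / r * exp (-(k * y) ^ 2) := by
        rw [sq_abs, ht, div_mul_eq_mul_div]; ring_nf

lemma summable_exp_neg_mul_int_sq {c : ℝ} (hc : 0 < c) :
    Summable fun k : ℤ => exp (-c * k ^ 2) := by
  have h : Summable fun n : ℕ => exp (-c * (n : ℝ) ^ 2) :=
    summable_exp_nat_mul_of_ge (neg_neg_of_pos hc) fun n => by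
      exact_mod_cast Nat.le_self_pow two_ne_zero n
  exact summable_int_iff_summable_nat_and_neg.2 ⟨by simpa using h, by simpa using h⟩

lemma summable_reflectionTerm {r : ℝ} (hr : 0 < r) (hr1 : r ≤ 1) {y : ℝ} (hy : y ≠ 0) :
    Summable (reflectionTerm r y) := by
  refine .of_norm_bounded ((summable_exp_neg_mul_int_sq (pow_pos (abs_pos.2 hy) 2)).mul_left
    (exp 9 / r)) fun k => ?_
  rw [norm_eq_abs]
  convert abs_reflectionTerm_le hr hr1 y k using 3
  rw [sq_abs]; ring

lemma neg_reflectionTerm_add_neg {r : ℝ} (hr : r ≠ 0) (y : ℝ) (k : ℤ) :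
    -(reflectionTerm r y k + reflectionTerm r y (-k)) =
      exp (-((2 * k * y) ^ 2 / 2)) / r *
        ((2 * k * y - r) * exp (r * (2 * k * y)) - (2 * k * y + r) * exp (-(r * (2 * k * y)))) := by
  simp only [reflectionTerm, Int.cast_neg]
  generalize (k : ℝ) = x
  have e₁ : exp (-(((r + 2 * x * y) ^ 2 - r ^ 2) / 2)) =
      exp (-((2 * x * y) ^ 2 / 2)) * exp (-(r * (2 * x * y))) := by
    rw [← exp_add]; ring_nf
  have e₂ : exp (-(((r + 2 * -x * y) ^ 2 - r ^ 2) / 2)) =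
      exp (-((2 * x * y) ^ 2 / 2)) * exp (r * (2 * x * y)) := by
    rw [← exp_add]; ring_nf
  rw [e₁, e₂]
  field_simp
  ring

lemma sub_mul_exp_sub_add_mul_exp_neg_le {r u : ℝ} (hr : 0 ≤ r) (hu : 0 ≤ u) :
    (u - r) * exp (r * u) - (u + r) * exp (-(r * u)) ≤ 2 * r * u ^ 2 * exp (r * u) := by
  have hsplit : exp (-(r * u)) = exp (r * u) * exp (-(2 * (r * u))) := by
    rw [← exp_add]; ring_nf
  have hlow : 1 - 2 * (r * u) ≤ exp (-(2 * (r * u))) := by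
    linarith [add_one_le_exp (-(2 * (r * u)))]
  have hE := exp_pos (r * u)
  rw [hsplit]
  nlinarith [mul_le_mul_of_nonneg_left hlow (mul_nonneg hu hE.le),
    mul_nonneg hr (add_pos hE (mul_pos hE (exp_pos (-(2 * (r * u)))))).le]

lemma neg_reflectionTerm_add_neg_le {r : ℝ} (hr : 0 < r) (hr1 : r ≤ 1) {y : ℝ} {k : ℤ}
    (hky : 0 ≤ k * y) :
    -(reflectionTerm r y k + reflectionTerm r y (-k)) ≤ 2 * exp 9 * exp (-(k * y) ^ 2) := by
  rw [neg_reflectionTerm_add_neg hr.ne']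
  set u : ℝ := 2 * k * y with hu_def
  have hu : 0 ≤ u := by rw [hu_def, mul_assoc]; positivity
  calc exp (-(u ^ 2 / 2)) / r * ((u - r) * exp (r * u) - (u + r) * exp (-(r * u)))
      ≤ exp (-(u ^ 2 / 2)) / r * (2 * r * u ^ 2 * exp (r * u)) := by
        gcongr; exact sub_mul_exp_sub_add_mul_exp_neg_le hr.le hu
    _ = 2 * (u ^ 2 * exp (r * u - u ^ 2 / 2)) := by
        rw [sub_eq_add_neg, exp_add]; field_simp
    _ ≤ 2 * ((1 + u) ^ 2 * exp (u - u ^ 2 / 2)) := by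
        gcongr
        · nlinarith
        · nlinarith
    _ ≤ 2 * (exp 9 * exp (-(u ^ 2 / 4))) := by
        gcongr 2 * ?_; exact one_add_sq_mul_exp_sub_le hu
    _ = 2 * exp 9 * exp (-(k * y) ^ 2) := by
        rw [hu_def]; ring_nf

lemma one_sub_tsum_reflectionTerm_le {r : ℝ} (hr : 0 < r) (hr1 : r ≤ 1) {y : ℝ} (hy : 1 ≤ y) :
    1 - ∑' k, reflectionTerm r y k ≤ 4 * exp 9 * exp (-y ^ 2) := by
  set f := reflectionTerm r y
  have hpairs : HasSum (fun n : ℕ => -(f (n + 1 : ℕ) + f (-(n + 1 : ℕ)))) (1 - ∑' k, f k) := by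
    have h := (summable_reflectionTerm hr hr1 (y := y) (by positivity)).hasSum.nat_add_neg
    rw [← hasSum_nat_add_iff' 1, Finset.sum_range_one, Nat.cast_zero, neg_zero,
      reflectionTerm_zero hr.ne'] at h
    rw [show 1 - ∑' k, f k = -(∑' k, f k + 1 - (1 + 1)) by ring]
    exact h.neg
  have hgeom := (hasSum_geometric_of_lt_one (exp_pos (-1)).le
    (exp_lt_one_iff.2 neg_one_lt_zero)).mul_left (2 * exp 9 * exp (-y ^ 2))
  have hterm (n : ℕ) : -(f (n + 1 : ℕ) + f (-(n + 1 : ℕ))) ≤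
      2 * exp 9 * exp (-y ^ 2) * exp (-1) ^ n := by
    refine (neg_reflectionTerm_add_neg_le hr hr1 (by positivity)).trans ?_
    rw [mul_assoc _ (exp (-y ^ 2)), ← exp_nat_mul, ← exp_add]
    gcongr _ * exp ?_
    push_cast
    have hn : (0 : ℝ) ≤ n := n.cast_nonneg
    nlinarith [mul_nonneg hn (sub_nonneg.2 (one_le_pow₀ (n := 2) hy)),
      mul_nonneg (sq_nonneg (n : ℝ)) (sq_nonneg y)]
  have hgeom_sum : (1 - exp (-1))⁻¹ ≤ 2 := by
    rw [inv_le_comm₀ (by linarith [exp_neg_one_lt_d9]) two_pos]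
    linarith [exp_neg_one_lt_d9]
  calc 1 - ∑' k, f k ≤ 2 * exp 9 * exp (-y ^ 2) * (1 - exp (-1))⁻¹ :=
        hasSum_le hterm hpairs hgeom
    _ ≤ 2 * exp 9 * exp (-y ^ 2) * 2 := by gcongr
    _ = 4 * exp 9 * exp (-y ^ 2) := by ring

/-- Gaussian tail bound for the conditioned maximum of Brownian motion before hitting `0`.
The conditional probability `ℙ(sup_{0≤s≤1} W_s ≥ y | T₀ = 1)` for a Brownian motion started
at `r₀` is expressed through the explicit series
`1 - ∑_{k∈ℤ} ((r₀+2ky)/r₀) exp(-((r₀+2ky)² - r₀²)/2)`. -/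
theorem stmt_13 :
    ∃ a : ℝ, 0 < a ∧ ∃ b : ℝ, 0 < b ∧
      ∀ r₀ ∈ Set.Ioc (0 : ℝ) 1, ∀ y : ℝ, 1 ≤ y →
        1 - ∑' k : ℤ, ((r₀ + 2 * k * y) / r₀) *
            Real.exp (-(((r₀ + 2 * k * y) ^ 2 - r₀ ^ 2) / 2))
          ≤ a * Real.exp (-b * y ^ 2) := by
  refine ⟨4 * exp 9, by positivity, 1, one_pos, ?_⟩
  rintro r₀ ⟨hr, hr1⟩ y hy
  rw [neg_one_mul]
  exact one_sub_tsum_reflectionTerm_le hr hr1 hy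
end

section
/- For all y ≥ 1 and 0 < r₀ ≤ 1: 1 − Σ_{k∈ℤ}[(r₀+2ky)/r₀]·exp(−((r₀+2ky)²−r₀²)/2) ≤ 8 Σ_{k=1}^∞ k²y² e^{2ky} e^{−2k²y²}, using that sinh(u)/u ≤ e^u for u ≥ 0. -/
/-! With `a = 2ky`, the terms `k` and `-k` of the left-hand series combine to
`2 e^{-a²/2} (cosh (r₀a) - (a/r₀) sinh (r₀a))`, while the term `k = 0` is `1`. Dropping the
cosh and using `sinh u ≤ u eᵘ`, minus each such pair is at most `2a² e^{r₀a} e^{-a²/2}`, and since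
`r₀ ≤ 1` this is at most `2a² e^{a - a²/2}`, eight times the corresponding term on the right. -/

open Real

theorem Real.sinh_le_mul_exp (u : ℝ) : sinh u ≤ u * exp u := by
  have h : 1 - 2 * u ≤ exp (-(2 * u)) := by linarith [add_one_le_exp (-(2 * u))]
  have h' : exp (-u) = exp u * exp (-(2 * u)) := by rw [← exp_add]; ring_nf
  rw [sinh_eq, h']
  nlinarith [exp_pos u]

theorem summable_pow_mul_exp_sub_mul_sq {c : ℝ} (hc : 0 < c) (b : ℝ) (j : ℕ) :
    Summable fun n : ℕ => (n : ℝ) ^ j * exp (b * n - c * n ^ 2) := by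
  have h := (summable_pow_mul_jacobiTheta₂_term_bound (b / (2 * π)) (div_pos hc pi_pos) j
    ).comp_injective Nat.cast_injective
  refine h.congr fun n => ?_
  simp only [Function.comp_apply, Int.cast_natCast, Nat.abs_cast]
  congr 2
  field_simp
  ring

theorem summable_pow_mul_exp_sub_sq_div_two {y : ℝ} (hy : 0 < y) (j : ℕ) :
    Summable fun n : ℕ =>
      (2 * (n + 1) * y) ^ j * exp (2 * (n + 1) * y - (2 * (n + 1) * y) ^ 2 / 2) := by
  have h := ((summable_nat_add_iff 1).mpr (summable_pow_mul_exp_sub_mul_sq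
    (c := 2 * y ^ 2) (by positivity) (2 * y) j)).mul_left ((2 * y) ^ j)
  refine h.congr fun n => ?_
  push_cast
  rw [← mul_assoc, ← mul_pow]
  congr 2 <;> ring

theorem sub_tsum_le_tsum_of_neg_add_le {f : ℤ → ℝ} {g : ℕ → ℝ}
    (hf₁ : Summable fun n : ℕ => f (n + 1)) (hf₂ : Summable fun n : ℕ => f (-(n + 1)))
    (hg : Summable g) (h : ∀ n : ℕ, -(f (n + 1) + f (-(n + 1))) ≤ g n) :
    f 0 - ∑' k, f k ≤ ∑' n, g n :=
  calc f 0 - ∑' k, f k = ∑' n : ℕ, -(f (n + 1) + f (-(n + 1))) := by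
        rw [tsum_of_add_one_of_neg_add_one hf₁ hf₂, tsum_neg, hf₁.tsum_add hf₂]; ring
    _ ≤ ∑' n, g n := (hf₁.add hf₂).neg.tsum_le_tsum h hg

noncomputable def gaussRatio (r x : ℝ) : ℝ := x / r * exp (-((x ^ 2 - r ^ 2) / 2))

section gaussRatio

variable {r : ℝ}

theorem gaussRatio_self (hr : r ≠ 0) : gaussRatio r r = 1 := by
  simp [gaussRatio, hr]

theorem gaussRatio_add_add_gaussRatio_sub (hr : r ≠ 0) (a : ℝ) :
    gaussRatio r (r + a) + gaussRatio r (r - a) =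
      2 * exp (-(a ^ 2 / 2)) * (cosh (r * a) - a / r * sinh (r * a)) := by
  rw [gaussRatio, gaussRatio, cosh_eq, sinh_eq,
    show -(((r + a) ^ 2 - r ^ 2) / 2) = -(a ^ 2 / 2) + -(r * a) by ring,
    show -(((r - a) ^ 2 - r ^ 2) / 2) = -(a ^ 2 / 2) + r * a by ring, exp_add, exp_add]
  field_simp
  ring

theorem neg_gaussRatio_add_add_gaussRatio_sub_le (hr₀ : 0 < r) (hr₁ : r ≤ 1) {a : ℝ}
    (ha : 0 ≤ a) :
    -(gaussRatio r (r + a) + gaussRatio r (r - a)) ≤ 2 * a ^ 2 * exp (a - a ^ 2 / 2) := by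
  have hra : r * a ≤ a := by nlinarith
  calc -(gaussRatio r (r + a) + gaussRatio r (r - a))
      = 2 * exp (-(a ^ 2 / 2)) * (a / r * sinh (r * a) - cosh (r * a)) := by
        rw [gaussRatio_add_add_gaussRatio_sub hr₀.ne']; ring
    _ ≤ 2 * exp (-(a ^ 2 / 2)) * (a / r * sinh (r * a)) := by
        gcongr; exact sub_le_self _ (cosh_pos _).le
    _ ≤ 2 * exp (-(a ^ 2 / 2)) * (a / r * (r * a * exp (r * a))) := by
        gcongr; exact sinh_le_mul_exp _
    _ = 2 * a ^ 2 * exp (r * a - a ^ 2 / 2) := by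
        rw [sub_eq_add_neg _ (a ^ 2 / 2), exp_add]; field_simp
    _ ≤ 2 * a ^ 2 * exp (a - a ^ 2 / 2) := by gcongr

theorem abs_gaussRatio_le (hr₀ : 0 < r) (hr₁ : r ≤ 1) (x : ℝ) :
    |gaussRatio r x| ≤ (1 + |x - r|) / r * exp (|x - r| - |x - r| ^ 2 / 2) := by
  have hx : |x| ≤ 1 + |x - r| := by
    have := abs_sub_abs_le_abs_sub x r; rw [abs_of_pos hr₀] at this; linarith
  have hexp : -((x ^ 2 - r ^ 2) / 2) ≤ |x - r| - |x - r| ^ 2 / 2 := by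
    have h1 : -(r * (x - r)) ≤ |x - r| := by
      have := neg_abs_le (x - r)
      nlinarith [abs_nonneg (x - r), le_abs_self (x - r)]
    rw [sq_abs]; nlinarith
  rw [gaussRatio, abs_mul, abs_div, abs_of_pos hr₀, abs_of_pos (exp_pos _)]
  gcongr

theorem summable_gaussRatio (hr₀ : 0 < r) (hr₁ : r ≤ 1) {y : ℝ} (hy : 0 < y) {x : ℕ → ℝ}
    (hx : ∀ n, |x n - r| = 2 * (n + 1) * y) : Summable fun n => gaussRatio r (x n) := by
  refine (((summable_pow_mul_exp_sub_sq_div_two hy 0).add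
    (summable_pow_mul_exp_sub_sq_div_two hy 1)).mul_left r⁻¹).of_norm_bounded fun n => ?_
  rw [norm_eq_abs]
  refine (abs_gaussRatio_le hr₀ hr₁ (x n)).trans (le_of_eq ?_)
  rw [hx]
  ring

end gaussRatio

theorem stmt_14 (r₀ : ℝ) (hr : r₀ ∈ Set.Ioc (0 : ℝ) 1) (y : ℝ) (hy : 1 ≤ y) :
    1 - ∑' k : ℤ, ((r₀ + 2 * k * y) / r₀) *
        Real.exp (-(((r₀ + 2 * k * y) ^ 2 - r₀ ^ 2) / 2))
      ≤ 8 * ∑' k : ℕ, ((k + 1 : ℝ) ^ 2 * y ^ 2) * Real.exp (2 * (k + 1) * y) *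
          Real.exp (-2 * (k + 1) ^ 2 * y ^ 2) := by
  obtain ⟨hr₀, hr₁⟩ := hr
  have hy₀ : 0 < y := by linarith
  have hpos : ∀ n : ℕ, r₀ + 2 * (((n : ℤ) + 1 : ℤ) : ℝ) * y = r₀ + 2 * (n + 1) * y := by
    intro n; push_cast; ring
  have hneg : ∀ n : ℕ, r₀ + 2 * ((-((n : ℤ) + 1) : ℤ) : ℝ) * y = r₀ - 2 * (n + 1) * y := by
    intro n; push_cast; ring
  have hdist : ∀ n : ℕ, |r₀ + 2 * (n + 1) * y - r₀| = 2 * (n + 1) * y ∧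
      |r₀ - 2 * (n + 1) * y - r₀| = 2 * (n + 1) * y := by
    intro n; constructor <;> simp [abs_of_pos, hy₀, add_pos_of_nonneg_of_pos]
  have hg : ∀ n : ℕ, 8 * (((n + 1 : ℝ) ^ 2 * y ^ 2) * exp (2 * (n + 1) * y) *
      exp (-2 * (n + 1) ^ 2 * y ^ 2)) =
        2 * (2 * (n + 1) * y) ^ 2 * exp (2 * (n + 1) * y - (2 * (n + 1) * y) ^ 2 / 2) := by
    intro n
    rw [show 2 * (n + 1) * y - (2 * (n + 1) * y) ^ 2 / 2 =
      2 * (n + 1) * y + -2 * (n + 1) ^ 2 * y ^ 2 by ring, exp_add]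
    ring
  calc 1 - ∑' k : ℤ, gaussRatio r₀ (r₀ + 2 * k * y)
      = gaussRatio r₀ (r₀ + 2 * ((0 : ℤ) : ℝ) * y) -
          ∑' k : ℤ, gaussRatio r₀ (r₀ + 2 * k * y) := by
        simp [gaussRatio_self hr₀.ne']
    _ ≤ ∑' n : ℕ, 8 * (((n + 1 : ℝ) ^ 2 * y ^ 2) * exp (2 * (n + 1) * y) *
          exp (-2 * (n + 1) ^ 2 * y ^ 2)) := by
        refine sub_tsum_le_tsum_of_neg_add_le (f := fun k : ℤ => gaussRatio r₀ (r₀ + 2 * k * y))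
          ?_ ?_ ?_ fun n => ?_
        · simp only [hpos]; exact summable_gaussRatio hr₀ hr₁ hy₀ fun n => (hdist n).1
        · simp only [hneg]; exact summable_gaussRatio hr₀ hr₁ hy₀ fun n => (hdist n).2
        · simp only [hg]
          simpa only [mul_assoc] using (summable_pow_mul_exp_sub_sq_div_two hy₀ 2).mul_left 2
        · rw [hpos, hneg, hg]
          exact neg_gaussRatio_add_add_gaussRatio_sub_le hr₀ hr₁ (by positivity)
    _ = 8 * ∑' n : ℕ, ((n + 1 : ℝ) ^ 2 * y ^ 2) * exp (2 * (n + 1) * y) *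
          exp (-2 * (n + 1) ^ 2 * y ^ 2) := tsum_mul_left
end
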